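/- For each N ∈ ℕ let ν^{(N)} be a Cannings offspring vector of size N with c_N := E((ν_1^{(N)})_2)/(N−1) > 0 for all sufficiently large N, and suppose that for all j ∈ ℕ and k_1,…,k_j ≥ 2 the limit φ_j(k_1,…,k_j) := lim_{N→∞} Φ_j^{(N)}(k_1,…,k_j)/c_N exists. Define φ_j on all of ℕ^j by setting φ_j(k) := lim_{N→∞} Φ_j^{(N)}(k)/c_N when k_1+⋯+k_j > j and φ_j(1,…,1) := lim_{N→∞}(Φ_j^{(N)}(1,…,1) − 1)/c_N (these limits exist). Then the limit functions satisfy the consistency relation φ_j(k_1,…,k_j) = φ_{j+1}(k_1,…,k_j,1) + Σ_{m=1}^j φ_j(k_1,…,k_m+1,…,k_j) for all j ∈ ℕ and all k_1,…,k_j ∈ ℕ, and they are monotone in the sense that φ_j(k_1,…,k_j) ≤ φ_ℓ(m_1,…,m_ℓ) whenever ℓ ≤ j, k_i ≥ m_i for i ≤ ℓ, and m_1+⋯+m_ℓ > ℓ, and moreover φ_j(1,…,1) ≤ φ_ℓ(1,…,1) for all ℓ ≤ j. -/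

import Mathlib

open MeasureTheory ProbabilityTheory Filter Finset

/-!
Fix `N` and write `K = k_1+⋯+k_j`. Since `ν_1+⋯+ν_N = N` and `(x)_{k+1} = (x - k)(x)_k`,
`(N - K)·∏_{i≤j} (ν_i)_{k_i}`
  `= ∑_{m≤j} ∏_{i≤j} (ν_i)_{k_i+δ_{im}} + ∑_{i>j} ν_i·∏_{i≤j} (ν_i)_{k_i}`.
Taking expectations, exchangeability turns the last sum into
`(N - j)·E(ν_{j+1} ∏_{i≤j} (ν_i)_{k_i})`, and multiplying by `(N)_j/(N)_{K+1}` gives the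
consistency relation for `Φ^{(N)}` itself. As every `Φ^{(N)}` is nonnegative, the relation shows
that `Φ^{(N)}` decreases when an entry grows or an entry `1` is appended, which is the
monotonicity. Both statements pass to the limit after division by `c_N > 0`; at `k = (1,…,1)`
the relation survives subtracting `1` from `Φ_j` and from `Φ_{j+1}`.
-/

/-- A Cannings offspring vector of size `N`. -/
def IsCannings {Ω : Type*} [MeasurableSpace Ω] (μ : Measure Ω) (N : ℕ)
    (ν : ℕ → Ω → ℕ) : Prop :=
  (∀ i, Measurable (ν i)) ∧
  (∀ᵐ ω ∂μ, ∑ i ∈ Finset.range N, ν i ω = N) ∧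
  (∀ σ : Equiv.Perm (Fin N),
    Measure.map (fun ω (i : Fin N) => ν (σ i : ℕ) ω) μ =
      Measure.map (fun ω (i : Fin N) => ν (i : ℕ) ω) μ)

/-- `Φ_j^{(N)}(k_1,…,k_j) = ((N)_j/(N)_{k_1+⋯+k_j})·E((ν_1)_{k_1}⋯(ν_j)_{k_j})`. -/
noncomputable def Phi {Ω : Type*} [MeasurableSpace Ω] (μ : Measure Ω)
    (ν : ℕ → Ω → ℕ) (N j : ℕ) (k : ℕ → ℕ) : ℝ :=
  ((N.descFactorial j : ℝ) / (N.descFactorial (∑ i ∈ Finset.range j, k i) : ℝ)) *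
    ∫ ω, ∏ i ∈ Finset.range j, ((ν i ω).descFactorial (k i) : ℝ) ∂μ

/-- The coalescence probability `c_N = E((ν_1)_2)/(N-1)`. -/
noncomputable def coalProb {Ω : Type*} [MeasurableSpace Ω] (μ : Measure Ω)
    (ν : ℕ → Ω → ℕ) (N : ℕ) : ℝ :=
  (∫ ω, ((ν 0 ω).descFactorial 2 : ℝ) ∂μ) / ((N : ℝ) - 1)

lemma Nat.cast_descFactorial_succ {R : Type*} [Ring R] (n k : ℕ) :
    (n.descFactorial (k + 1) : R) = ((n : R) - k) * n.descFactorial k := by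
  rcases lt_or_ge n k with h | h
  · rw [Nat.descFactorial_eq_zero_iff_lt.2 h, Nat.descFactorial_eq_zero_iff_lt.2 (by omega)]
    simp
  · rw [Nat.descFactorial_succ, Nat.cast_mul, Nat.cast_sub h]

section Update

variable {j m : ℕ} (k : ℕ → ℕ)

lemma sum_range_update_succ (hm : m < j) :
    ∑ i ∈ range j, Function.update k m (k m + 1) i = ∑ i ∈ range j, k i + 1 := by
  rw [sum_update_of_mem (mem_range.2 hm), sum_eq_add_sum_sdiff_singleton_of_mem (mem_range.2 hm)]
  ring

lemma sum_range_succ_update_self (b : ℕ) :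
    ∑ i ∈ range (j + 1), Function.update k j b i = ∑ i ∈ range j, k i + b := by
  rw [sum_range_succ, Function.update_self]
  congr 1
  exact sum_congr rfl fun i hi => Function.update_of_ne (mem_range.1 hi).ne _ _

lemma prod_range_update_succ (x : ℕ → ℕ) (hm : m < j) :
    ∏ i ∈ range j, ((x i).descFactorial (Function.update k m (k m + 1) i) : ℝ) =
      ((x m : ℝ) - k m) * ∏ i ∈ range j, ((x i).descFactorial (k i) : ℝ) := by
  simp_rw [Function.apply_update (fun i n => ((x i).descFactorial n : ℝ))]
  rw [prod_update_of_mem (mem_range.2 hm), prod_eq_mul_prod_sdiff_singleton_of_mem (mem_range.2 hm),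
    Nat.cast_descFactorial_succ, mul_assoc]

lemma prod_range_succ_update_one (x : ℕ → ℕ) :
    ∏ i ∈ range (j + 1), ((x i).descFactorial (Function.update k j 1 i) : ℝ) =
      (x j : ℝ) * ∏ i ∈ range j, ((x i).descFactorial (k i) : ℝ) := by
  rw [prod_range_succ, Function.update_self, Nat.descFactorial_one, mul_comm]
  congr 1
  exact prod_congr rfl fun i hi => by rw [Function.update_of_ne (mem_range.1 hi).ne]

lemma one_le_update {b : ℕ} (hk : ∀ i < j, i ≠ m → 1 ≤ k i) (hb : 1 ≤ b) :
    ∀ i < j, 1 ≤ Function.update k m b i := by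
  intro i hi
  rcases eq_or_ne i m with rfl | him
  · rwa [Function.update_self]
  · rw [Function.update_of_ne him]
    exact hk i hi him

lemma le_sum_range_of_one_le (hk : ∀ i < j, 1 ≤ k i) : j ≤ ∑ i ∈ range j, k i := by
  simpa using card_nsmul_le_sum (range j) k 1 fun i hi => hk i (mem_range.1 hi)

lemma eq_one_of_sum_range_eq (hk : ∀ i < j, 1 ≤ k i) (hsum : ∑ i ∈ range j, k i = j) :
    ∀ i < j, k i = 1 := by
  have hle : ∀ i ∈ range j, 1 ≤ k i := fun i hi => hk i (mem_range.1 hi)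
  have := (sum_eq_sum_iff_of_le hle).1 (by simpa using hsum.symm)
  exact fun i hi => (this i (mem_range.2 hi)).symm

lemma lt_sum_range_of_lt_sum_range {l : ℕ} (k' : ℕ → ℕ) (hlj : l ≤ j)
    (hk : ∀ i < j, 1 ≤ k i) (hk' : ∀ i < l, k' i ≤ k i) (hl : l < ∑ i ∈ range l, k' i) :
    j < ∑ i ∈ range j, k i := by
  rw [← sum_range_add_sum_Ico k hlj]
  have h1 : ∑ i ∈ range l, k' i ≤ ∑ i ∈ range l, k i :=
    sum_le_sum fun i hi => hk' i (mem_range.1 hi)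
  have h2 : j - l ≤ ∑ i ∈ Ico l j, k i := by
    simpa using card_nsmul_le_sum (Ico l j) k 1 fun i hi => hk i (mem_Ico.1 hi).2
  omega

end Update

lemma sub_sum_mul_prod_descFactorial {N j : ℕ} (k x : ℕ → ℕ) (hx : ∑ i ∈ range N, x i = N)
    (hj : j ≤ N) :
    ((N : ℝ) - ∑ i ∈ range j, k i) * ∏ i ∈ range j, ((x i).descFactorial (k i) : ℝ) =
      ∑ m ∈ range j, ∏ i ∈ range j, ((x i).descFactorial (Function.update k m (k m + 1) i) : ℝ) +
        ∑ i ∈ Ico j N, (x i : ℝ) * ∏ t ∈ range j, ((x t).descFactorial (k t) : ℝ) := by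
  rw [sum_congr rfl fun m hm => prod_range_update_succ k x (mem_range.1 hm), ← sum_mul, ← sum_mul,
    ← add_mul]
  have hN : (N : ℝ) = ∑ i ∈ range j, (x i : ℝ) + ∑ i ∈ Ico j N, (x i : ℝ) := by
    rw [sum_range_add_sum_Ico _ hj]
    exact_mod_cast hx.symm
  rw [hN, sum_sub_distrib]
  push_cast
  ring

namespace IsCannings

variable {Ω : Type*} [MeasurableSpace Ω] {μ : Measure Ω} {N : ℕ} {ν : ℕ → Ω → ℕ}

lemma ae_le (hC : IsCannings μ N ν) : ∀ᵐ ω ∂μ, ∀ i < N, ν i ω ≤ N := by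
  filter_upwards [hC.2.1] with ω hω i hi
  exact hω ▸ single_le_sum (fun t _ => Nat.zero_le (ν t ω)) (mem_range.2 hi)

lemma integrable_prod_descFactorial [IsFiniteMeasure μ] (hC : IsCannings μ N ν)
    {s : Finset ℕ} (hs : ∀ i ∈ s, i < N) (k : ℕ → ℕ) :
    Integrable (fun ω => ∏ i ∈ s, ((ν i ω).descFactorial (k i) : ℝ)) μ := by
  have hmeas : Measurable fun ω => ∏ i ∈ s, ((ν i ω).descFactorial (k i) : ℝ) :=
    measurable_prod _ fun i _ =>
      (measurable_from_nat (f := fun n : ℕ => (n.descFactorial (k i) : ℝ))).comp (hC.1 i)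
  refine .of_bound hmeas.aestronglyMeasurable ((N : ℝ) ^ ∑ i ∈ s, k i) ?_
  filter_upwards [hC.ae_le] with ω hω
  rw [Real.norm_of_nonneg (by positivity), ← prod_pow_eq_pow_sum]
  refine prod_le_prod (fun i _ => by positivity) fun i hi => ?_
  exact_mod_cast (Nat.descFactorial_le_pow _ _).trans (Nat.pow_le_pow_left (hω i (hs i hi)) _)

lemma integrable_mul_prod_descFactorial [IsFiniteMeasure μ] (hC : IsCannings μ N ν)
    {i j : ℕ} (hi : i < N) (hj : j ≤ N) (k : ℕ → ℕ) :
    Integrable (fun ω => (ν i ω : ℝ) * ∏ m ∈ range j, ((ν m ω).descFactorial (k m) : ℝ)) μ := by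
  refine (hC.integrable_prod_descFactorial (fun m hm => (mem_range.1 hm).trans_le hj) k).bdd_mul
    (measurable_from_nat.comp (hC.1 i)).aestronglyMeasurable (c := N) ?_
  filter_upwards [hC.ae_le] with ω hω
  simpa using hω i hi

lemma integral_comp_perm (hC : IsCannings μ N ν) (σ : Equiv.Perm (Fin N))
    (F : (Fin N → ℕ) → ℝ) :
    ∫ ω, F (fun t => ν (σ t) ω) ∂μ = ∫ ω, F (fun t => ν t ω) ∂μ := by
  have hF : Measurable F := measurable_of_countable F
  have hX : Measurable fun ω (t : Fin N) => ν (σ t) ω := measurable_pi_lambda _ fun t => hC.1 _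
  have hX₁ : Measurable fun ω (t : Fin N) => ν t ω := measurable_pi_lambda _ fun t => hC.1 _
  rw [← integral_map hX.aemeasurable hF.aestronglyMeasurable, hC.2.2 σ,
    integral_map hX₁.aemeasurable hF.aestronglyMeasurable]

lemma integral_mul_prod_descFactorial_eq (hC : IsCannings μ N ν) (k : ℕ → ℕ) {i j : ℕ}
    (hji : j ≤ i) (hi : i < N) :
    ∫ ω, (ν i ω : ℝ) * ∏ m ∈ range j, ((ν m ω).descFactorial (k m) : ℝ) ∂μ =
      ∫ ω, (ν j ω : ℝ) * ∏ m ∈ range j, ((ν m ω).descFactorial (k m) : ℝ) ∂μ := by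
  have hj : j < N := hji.trans_lt hi
  let F : (Fin N → ℕ) → ℝ := fun x =>
    (x ⟨j, hj⟩ : ℝ) * ∏ m : Fin j, ((x (Fin.castLE hj.le m)).descFactorial (k m) : ℝ)
  have hF : ∀ x : ℕ → ℕ, F (fun t => x t) =
      (x j : ℝ) * ∏ m ∈ range j, ((x m).descFactorial (k m) : ℝ) := fun x => by
    simp only [F, Fin.val_castLE,
      Fin.prod_univ_eq_prod_range (fun m => ((x m).descFactorial (k m) : ℝ))]
  have hswap : ∀ ω, F (fun t => ν (Equiv.swap (⟨i, hi⟩ : Fin N) ⟨j, hj⟩ t) ω) =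
      (ν i ω : ℝ) * ∏ m ∈ range j, ((ν m ω).descFactorial (k m) : ℝ) := fun ω => by
    simp_rw [← Fin.val_injective.swap_apply, hF fun n => ν (Equiv.swap i j n) ω,
      Equiv.swap_apply_right]
    congr 1
    refine prod_congr rfl fun m hm => ?_
    rw [Equiv.swap_apply_of_ne_of_ne] <;> simp at hm <;> omega
  have hid : ∀ ω, F (fun t => ν t ω) =
      (ν j ω : ℝ) * ∏ m ∈ range j, ((ν m ω).descFactorial (k m) : ℝ) := fun ω => hF (ν · ω)
  simpa only [hswap, hid] using hC.integral_comp_perm (Equiv.swap ⟨i, hi⟩ ⟨j, hj⟩) F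

lemma sub_sum_mul_integral_prod_descFactorial [IsFiniteMeasure μ] (hC : IsCannings μ N ν)
    (k : ℕ → ℕ) {j : ℕ} (hj : j < N) :
    ((N : ℝ) - ∑ i ∈ range j, k i) * ∫ ω, ∏ i ∈ range j, ((ν i ω).descFactorial (k i) : ℝ) ∂μ =
      ∑ m ∈ range j, ∫ ω, ∏ i ∈ range j,
          ((ν i ω).descFactorial (Function.update k m (k m + 1) i) : ℝ) ∂μ +
        ((N : ℝ) - j) * ∫ ω, (ν j ω : ℝ) * ∏ i ∈ range j, ((ν i ω).descFactorial (k i) : ℝ) ∂μ := by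
  have hrange : ∀ i ∈ range j, i < N := fun i hi => (mem_range.1 hi).trans hj
  have hint_update : ∀ m ∈ range j, Integrable (fun ω => ∏ i ∈ range j,
      ((ν i ω).descFactorial (Function.update k m (k m + 1) i) : ℝ)) μ :=
    fun m _ => hC.integrable_prod_descFactorial hrange _
  have hint_mul : ∀ i ∈ Ico j N, Integrable (fun ω =>
      (ν i ω : ℝ) * ∏ i ∈ range j, ((ν i ω).descFactorial (k i) : ℝ)) μ :=
    fun i hi => hC.integrable_mul_prod_descFactorial (mem_Ico.1 hi).2 hj.le k
  calc ((N : ℝ) - ∑ i ∈ range j, k i) * ∫ ω, ∏ i ∈ range j, ((ν i ω).descFactorial (k i) : ℝ) ∂μ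
      = ∫ ω, ((N : ℝ) - ∑ i ∈ range j, k i) *
          ∏ i ∈ range j, ((ν i ω).descFactorial (k i) : ℝ) ∂μ := (integral_const_mul _ _).symm
    _ = ∫ ω, (∑ m ∈ range j, ∏ i ∈ range j,
            ((ν i ω).descFactorial (Function.update k m (k m + 1) i) : ℝ) +
          ∑ i ∈ Ico j N, (ν i ω : ℝ) * ∏ i ∈ range j, ((ν i ω).descFactorial (k i) : ℝ)) ∂μ := by
      refine integral_congr_ae ?_
      filter_upwards [hC.2.1] with ω hω
      exact sub_sum_mul_prod_descFactorial k (ν · ω) hω hj.le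
    _ = _ := by
      rw [integral_add (integrable_finsetSum _ hint_update) (integrable_finsetSum _ hint_mul),
        integral_finsetSum _ hint_update, integral_finsetSum _ hint_mul,
        sum_congr rfl fun i hi => hC.integral_mul_prod_descFactorial_eq k (mem_Ico.1 hi).1
          (mem_Ico.1 hi).2, sum_const, Nat.card_Ico, nsmul_eq_mul, Nat.cast_sub hj.le]

end IsCannings

section Phi

variable {Ω : Type*} [MeasurableSpace Ω] {μ : Measure Ω} {N j : ℕ} {ν : ℕ → Ω → ℕ}

lemma Phi_nonneg (k : ℕ → ℕ) : 0 ≤ Phi μ ν N j k :=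
  mul_nonneg (by positivity) (integral_nonneg fun _ => by positivity)

lemma Phi_congr {k k' : ℕ → ℕ} (h : ∀ i < j, k i = k' i) : Phi μ ν N j k = Phi μ ν N j k' := by
  have h' : ∀ i ∈ range j, k i = k' i := fun i hi => h i (mem_range.1 hi)
  rw [Phi, Phi, sum_congr rfl h']
  congr 1
  exact integral_congr_ae (.of_forall fun ω => prod_congr rfl fun i hi => by rw [h' i hi])

variable [IsFiniteMeasure μ]

lemma Phi_consistency (hC : IsCannings μ N ν) (k : ℕ → ℕ) (hj : j < N)
    (hK : ∑ i ∈ range j, k i < N) :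
    Phi μ ν N j k = Phi μ ν N (j + 1) (Function.update k j 1) +
      ∑ m ∈ range j, Phi μ ν N j (Function.update k m (k m + 1)) := by
  have hidentity := hC.sub_sum_mul_integral_prod_descFactorial k hj
  have hupdate : ∀ m ∈ range j, Phi μ ν N j (Function.update k m (k m + 1)) =
      (N.descFactorial j : ℝ) / N.descFactorial (∑ i ∈ range j, k i + 1) * ∫ ω, ∏ i ∈ range j,
        ((ν i ω).descFactorial (Function.update k m (k m + 1) i) : ℝ) ∂μ := fun m hm => by
    rw [Phi, sum_range_update_succ k (mem_range.1 hm)]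
  rw [sum_congr rfl hupdate, ← mul_sum, Phi, Phi, sum_range_succ_update_self]
  simp_rw [prod_range_succ_update_one]
  rw [Nat.cast_descFactorial_succ, Nat.cast_descFactorial_succ]
  have hKpos : (0 : ℝ) < N.descFactorial (∑ i ∈ range j, k i) := by
    exact_mod_cast Nat.descFactorial_pos.2 hK.le
  have hNK : (0 : ℝ) < N - ∑ i ∈ range j, k i := by
    rw [sub_pos]; exact_mod_cast hK
  field_simp
  linear_combination (N.descFactorial j : ℝ) * hidentity

lemma Phi_update_succ_le (hC : IsCannings μ N ν) (k : ℕ → ℕ) {m : ℕ} (hm : m < j) (hj : j < N)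
    (hK : ∑ i ∈ range j, k i < N) :
    Phi μ ν N j (Function.update k m (k m + 1)) ≤ Phi μ ν N j k := by
  rw [Phi_consistency hC k hj hK]
  have hsingle := single_le_sum (f := fun m => Phi μ ν N j (Function.update k m (k m + 1)))
    (fun _ _ => Phi_nonneg _) (mem_range.2 hm)
  linarith [Phi_nonneg (μ := μ) (ν := ν) (N := N) (j := j + 1) (Function.update k j 1)]

lemma Phi_succ_update_one_le (hC : IsCannings μ N ν) (k : ℕ → ℕ) (hj : j < N)
    (hK : ∑ i ∈ range j, k i < N) :
    Phi μ ν N (j + 1) (Function.update k j 1) ≤ Phi μ ν N j k := by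
  rw [Phi_consistency hC k hj hK]
  linarith [sum_nonneg fun m (_ : m ∈ range j) =>
    Phi_nonneg (μ := μ) (ν := ν) (N := N) (j := j) (Function.update k m (k m + 1))]

lemma Phi_le_of_le (hC : IsCannings μ N ν) {k k' : ℕ → ℕ} (hkk' : ∀ i < j, k' i ≤ k i)
    (hj : j < N) (hK : ∑ i ∈ range j, k i < N) : Phi μ ν N j k ≤ Phi μ ν N j k' := by
  induction hs : ∑ i ∈ range j, k i using Nat.strong_induction_on generalizing k with
  | _ s ih =>
  by_cases heq : ∀ i < j, k i = k' i
  · exact (Phi_congr heq).le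
  push Not at heq
  obtain ⟨m, hm, hne⟩ := heq
  have hlt : k' m < k m := lt_of_le_of_ne (hkk' m hm) (Ne.symm hne)
  set k₁ := Function.update k m (k m - 1)
  have hk : Function.update k₁ m (k₁ m + 1) = k := by
    simp only [k₁, Function.update_self, Function.update_idem]
    rw [Nat.sub_add_cancel (by omega), Function.update_eq_self]
  have hs₁ : ∑ i ∈ range j, k₁ i + 1 = s := by rw [← hs, ← sum_range_update_succ k₁ hm, hk]
  calc Phi μ ν N j k = Phi μ ν N j (Function.update k₁ m (k₁ m + 1)) := by rw [hk]
    _ ≤ Phi μ ν N j k₁ := Phi_update_succ_le hC k₁ hm hj (by omega)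
    _ ≤ Phi μ ν N j k' := by
      refine ih _ (by omega) (fun i hi => ?_) (by omega) rfl
      rcases eq_or_ne i m with rfl | him
      · simp only [k₁, Function.update_self]; omega
      · simp only [k₁, Function.update_of_ne him]; exact hkk' i hi

lemma Phi_succ_le (hC : IsCannings μ N ν) {k : ℕ → ℕ} (hkj : 1 ≤ k j) (hj : j + 1 < N)
    (hK : ∑ i ∈ range (j + 1), k i < N) : Phi μ ν N (j + 1) k ≤ Phi μ ν N j k := by
  rw [sum_range_succ] at hK
  calc Phi μ ν N (j + 1) k ≤ Phi μ ν N (j + 1) (Function.update k j 1) := by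
        refine Phi_le_of_le hC (fun i hi => ?_) hj (by rw [sum_range_succ]; omega)
        rcases eq_or_ne i j with rfl | hij
        · rwa [Function.update_self]
        · rw [Function.update_of_ne hij]
    _ ≤ Phi μ ν N j k := Phi_succ_update_one_le hC k (by omega) (by omega)

lemma Phi_le_Phi (hC : IsCannings μ N ν) {l : ℕ} {k m : ℕ → ℕ} (hlj : l ≤ j)
    (hk : ∀ i < j, 1 ≤ k i) (hmk : ∀ i < l, m i ≤ k i) (hK : ∑ i ∈ range j, k i < N) :
    Phi μ ν N j k ≤ Phi μ ν N l m := by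
  have hj : j < N := (le_sum_range_of_one_le k hk).trans_lt hK
  calc Phi μ ν N j k ≤ Phi μ ν N l k := by
        induction j, hlj using Nat.le_induction with
        | base => rfl
        | succ j hlj ih =>
          have hK' : ∑ i ∈ range j, k i < N := by rw [sum_range_succ] at hK; omega
          exact (Phi_succ_le hC (hk j j.lt_succ_self) hj hK).trans
            (ih (fun i hi => hk i (hi.trans j.lt_succ_self)) hK' (j.lt_succ_self.trans hj))
    _ ≤ Phi μ ν N l m := Phi_le_of_le hC hmk (hlj.trans_lt hj)
        ((sum_le_sum_of_subset (range_subset_range.2 hlj)).trans_lt hK)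

end Phi

/-- For `k ≥ 1`, the condition `∑ i < j, k i = j` means `k = (1,…,1)`, so this is the approximant of
`φ_j(k)` in both cases of its definition. -/
noncomputable def rescaledPhi {Ω : Type*} [MeasurableSpace Ω] (μ : Measure Ω) (ν : ℕ → Ω → ℕ)
    (N j : ℕ) (k : ℕ → ℕ) : ℝ :=
  (Phi μ ν N j k - if ∑ i ∈ range j, k i = j then 1 else 0) / coalProb μ ν N

lemma rescaledPhi_consistency {Ω : Type*} [MeasurableSpace Ω] {μ : Measure Ω} [IsFiniteMeasure μ]
    {N j : ℕ} {ν : ℕ → Ω → ℕ} (hC : IsCannings μ N ν) {k : ℕ → ℕ} (hk : ∀ i < j, 1 ≤ k i)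
    (hK : ∑ i ∈ range j, k i < N) :
    rescaledPhi μ ν N j k = rescaledPhi μ ν N (j + 1) (Function.update k j 1) +
      ∑ m ∈ range j, rescaledPhi μ ν N j (Function.update k m (k m + 1)) := by
  have hjK := le_sum_range_of_one_le k hk
  have hupdate : ∀ m ∈ range j, rescaledPhi μ ν N j (Function.update k m (k m + 1)) =
      Phi μ ν N j (Function.update k m (k m + 1)) / coalProb μ ν N := fun m hm => by
    rw [rescaledPhi, sum_range_update_succ k (mem_range.1 hm), if_neg (by omega), sub_zero]
  rw [sum_congr rfl hupdate, ← sum_div, rescaledPhi, rescaledPhi, sum_range_succ_update_self,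
    Phi_consistency hC k (hjK.trans_lt hK) hK, ← add_div]
  congr 1
  simp only [add_left_inj]
  ring

lemma tendsto_rescaledPhi {Ω : ℕ → Type*} [∀ N, MeasurableSpace (Ω N)] {μ : ∀ N, Measure (Ω N)}
    {ν : ∀ N, ℕ → Ω N → ℕ} {φ : ℕ → (ℕ → ℕ) → ℝ}
    (hφext : ∀ j (k k' : ℕ → ℕ), (∀ i < j, k i = k' i) → φ j k = φ j k')
    (hφ : ∀ j, 1 ≤ j → ∀ k : ℕ → ℕ, (∀ i < j, 1 ≤ k i) → j < ∑ i ∈ range j, k i →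
      Tendsto (fun N => Phi (μ N) (ν N) N j k / coalProb (μ N) (ν N) N) atTop (nhds (φ j k)))
    (hφ1 : ∀ j, 1 ≤ j →
      Tendsto (fun N => (Phi (μ N) (ν N) N j (fun _ => 1) - 1) / coalProb (μ N) (ν N) N)
        atTop (nhds (φ j (fun _ => 1))))
    {j : ℕ} (hj : 1 ≤ j) {k : ℕ → ℕ} (hk : ∀ i < j, 1 ≤ k i) :
    Tendsto (fun N => rescaledPhi (μ N) (ν N) N j k) atTop (nhds (φ j k)) := by
  by_cases hK : ∑ i ∈ range j, k i = j
  · have hone := eq_one_of_sum_range_eq k hk hK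
    simpa only [rescaledPhi, hK, if_true, Phi_congr hone, hφext j k _ hone] using hφ1 j hj
  · simpa only [rescaledPhi, hK, if_false, sub_zero] using
      hφ j hj k hk ((le_sum_range_of_one_le k hk).lt_of_ne (Ne.symm hK))

/-- The limit functions `φ_j = lim_N Φ_j^{(N)}/c_N` (with
`φ_j(1,…,1) = lim_N (Φ_j^{(N)}(1,…,1) - 1)/c_N`) inherit the consistency relation and the
monotonicity property from the `Φ_j^{(N)}`. -/
theorem cannings_phi_limit_consistency_and_monotonicity
    {Ω : ℕ → Type*} [∀ N, MeasurableSpace (Ω N)]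
    (μ : ∀ N, Measure (Ω N)) [∀ N, IsProbabilityMeasure (μ N)]
    (ν : ∀ N, ℕ → Ω N → ℕ) (hC : ∀ N, IsCannings (μ N) N (ν N))
    (hpos : ∀ᶠ N in atTop, 0 < coalProb (μ N) (ν N) N)
    (φ : ℕ → (ℕ → ℕ) → ℝ)
    (hφext : ∀ j (k k' : ℕ → ℕ), (∀ i < j, k i = k' i) → φ j k = φ j k')
    (hφ : ∀ j, 1 ≤ j → ∀ k : ℕ → ℕ, (∀ i < j, 1 ≤ k i) →
      j < ∑ i ∈ Finset.range j, k i →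
      Tendsto (fun N => Phi (μ N) (ν N) N j k / coalProb (μ N) (ν N) N)
        atTop (nhds (φ j k)))
    (hφ1 : ∀ j, 1 ≤ j →
      Tendsto (fun N => (Phi (μ N) (ν N) N j (fun _ => 1) - 1) / coalProb (μ N) (ν N) N)
        atTop (nhds (φ j (fun _ => 1)))) :
    (∀ j, 1 ≤ j → ∀ k : ℕ → ℕ, (∀ i < j, 1 ≤ k i) →
      φ j k = φ (j + 1) (Function.update k j 1) +
        ∑ m ∈ Finset.range j, φ j (Function.update k m (k m + 1))) ∧
    (∀ l j, 1 ≤ l → l ≤ j → ∀ k m : ℕ → ℕ, (∀ i < j, 1 ≤ k i) → (∀ i < l, 1 ≤ m i) →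
      (∀ i < l, m i ≤ k i) → l < ∑ i ∈ Finset.range l, m i →
      φ j k ≤ φ l m) ∧
    (∀ l j, 1 ≤ l → l ≤ j → φ j (fun _ => 1) ≤ φ l (fun _ => 1)) := by
  have hlim := fun j hj k hk => tendsto_rescaledPhi hφext hφ hφ1 (j := j) hj (k := k) hk
  refine ⟨fun j hj k hk => ?_, fun l j hl hlj k m hk hm₁ hmk hm => ?_, fun l j hl hlj => ?_⟩
  · have hupdate : Tendsto (fun N => ∑ m ∈ range j,
        rescaledPhi (μ N) (ν N) N j (Function.update k m (k m + 1))) atTop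
        (nhds (∑ m ∈ range j, φ j (Function.update k m (k m + 1)))) :=
      tendsto_finsetSum _ fun m _ =>
        hlim j hj _ (one_le_update k (fun i hi _ => hk i hi) (by omega))
    have happend := hlim (j + 1) (by omega) (Function.update k j 1)
      (one_le_update k (fun i hi hij => hk i (by omega)) le_rfl)
    refine tendsto_nhds_unique (hlim j hj k hk) ((happend.add hupdate).congr' ?_)
    filter_upwards [eventually_gt_atTop (∑ i ∈ range j, k i)] with N hN
    exact (rescaledPhi_consistency (hC N) hk hN).symm
  · refine le_of_tendsto_of_tendsto (hφ j (hl.trans hlj) k hk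
      (lt_sum_range_of_lt_sum_range k m hlj hk hmk hm)) (hφ l hl m hm₁ hm) ?_
    filter_upwards [hpos, eventually_gt_atTop (∑ i ∈ range j, k i)] with N hc hN
    exact div_le_div_of_nonneg_right (Phi_le_Phi (hC N) hlj hk hmk hN) hc.le
  · refine le_of_tendsto_of_tendsto (hφ1 j (hl.trans hlj)) (hφ1 l hl) ?_
    filter_upwards [hpos, eventually_gt_atTop j] with N hc hN
    refine div_le_div_of_nonneg_right (sub_le_sub_right ?_ 1) hc.le
    exact Phi_le_Phi (hC N) hlj (fun _ _ => le_rfl) (fun _ _ => le_rfl) (by simpa using hN)
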